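/- Let U be a unitary operator on ℂ³, z a unit vector, Θ = span{z}^⊥, Π₁ = I - zz*, A = Π₁U|_Θ, and ω = ⟨z, Uz⟩. Then A is invertible if and only if ω ≠ 0. -/

import Mathlib

noncomputable section
open scoped InnerProductSpace
open Polynomial

abbrev E3 : Type := EuclideanSpace ℂ (Fin 3)

def Theta (z : E3) : Submodule ℂ E3 := (ℂ ∙ z)ᗮ

noncomputable def Aop (U : E3 →L[ℂ] E3) (z : E3) : Theta z →ₗ[ℂ] Theta z :=
  (((Theta z).orthogonalProjection).toLinearMap).comp ((U.toLinearMap).comp (Theta z).subtype)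

theorem stmt2 (U : E3 →L[ℂ] E3) (hU : U ∈ unitary (E3 →L[ℂ] E3))
    (z : E3) (hz : ‖z‖ = 1) :
    IsUnit (Aop U z) ↔ ⟪z, U z⟫_ℂ ≠ 0 := by
  obtain ⟨h1, h2⟩ := Unitary.mem_iff.mp hU
  have hUUs : ∀ x : E3, U (ContinuousLinearMap.adjoint U x) = x := by
    intro x
    have := congrArg (fun T : E3 →L[ℂ] E3 => T x) h2
    simpa [ContinuousLinearMap.star_eq_adjoint, ContinuousLinearMap.mul_apply] using this
  have hUsU : ∀ x : E3, ContinuousLinearMap.adjoint U (U x) = x := by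
    intro x
    have := congrArg (fun T : E3 →L[ℂ] E3 => T x) h1
    simpa [ContinuousLinearMap.star_eq_adjoint, ContinuousLinearMap.mul_apply] using this
  have hinner : ∀ x y : E3, ⟪U x, U y⟫_ℂ = ⟪x, y⟫_ℂ := fun x y => by
    rw [← ContinuousLinearMap.adjoint_inner_left, hUsU]
  have hzne : z ≠ 0 := by
    intro h; rw [h, norm_zero] at hz; norm_num at hz
  constructor
  · intro hA
    by_contra hω
    set w := ContinuousLinearMap.adjoint U z with hw
    have hwT : w ∈ Theta z := by
      rw [Theta, Submodule.mem_orthogonal_singleton_iff_inner_right,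
        ContinuousLinearMap.adjoint_inner_right]
      rw [← inner_conj_symm, hω, map_zero]
    have hAw : Aop U z ⟨w, hwT⟩ = 0 := by
      have hUw : U w = z := hUUs z
      show (Theta z).orthogonalProjection (U w) = 0
      rw [hUw, Submodule.orthogonalProjectionOnto_eq_zero_iff]
      exact Submodule.le_orthogonal_orthogonal _ (Submodule.mem_span_singleton_self z)
    have hinj := LinearMap.ker_eq_bot.mp ((LinearMap.isUnit_iff_ker_eq_bot _).mp hA)
    have : (⟨w, hwT⟩ : Theta z) = 0 := hinj (by rw [hAw, map_zero])
    have hw0 : w = 0 := congrArg Subtype.val this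
    have : z = 0 := by rw [← hUUs z, ← hw, hw0, map_zero]
    exact hzne this
  · intro hω
    rw [LinearMap.isUnit_iff_ker_eq_bot, Submodule.eq_bot_iff]
    rintro ⟨w, hwT⟩ hker
    have hker' : (Theta z).orthogonalProjection (U w) = 0 := by
      have : Aop U z ⟨w, hwT⟩ = 0 := hker
      exact this
    have hUw : U w ∈ ℂ ∙ z := by
      rw [Submodule.orthogonalProjectionOnto_eq_zero_iff] at hker'
      rwa [Theta, Submodule.orthogonal_orthogonal] at hker'
    obtain ⟨c, hc⟩ := Submodule.mem_span_singleton.mp hUw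
    have h0 : ⟪U z, U w⟫_ℂ = 0 := by
      rw [hinner]
      rw [Theta, Submodule.mem_orthogonal_singleton_iff_inner_right] at hwT
      exact hwT
    have hcz : c * ⟪U z, z⟫_ℂ = 0 := by
      rw [← hc, inner_smul_right] at h0; exact h0
    have hUzz : ⟪U z, z⟫_ℂ ≠ 0 := fun h => hω (by rw [← inner_conj_symm, h, map_zero])
    have hc0 : c = 0 := by
      rcases mul_eq_zero.mp hcz with h | h
      · exact h
      · exact absurd h hUzz
    have hUw0 : U w = 0 := by rw [← hc, hc0, zero_smul]
    have hw0 : w = 0 := by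
      have := hUsU w
      rw [hUw0, map_zero] at this
      exact this.symm
    exact Subtype.ext hw0
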